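/- Let A be a real 2×2 matrix with β_1 = a_{11} − a_{21} ≤ 0 and β_2 = a_{22} − a_{12} > 0, and let the constraint set be C = [α, 1] with 0 < α < 1. Then m* = α is the unique constrained evolutionarily stable strategy of the constrained single-population game. -/

import Mathlib

/-!
Since `u_A` is affine in the player's own strategy,
`u_A(x, p) - u_A(y, p) = (x - y) (p β₁ - (1 - p) β₂)`, and for `β₁ ≤ 0 < β₂` the second factor is
negative at every state `p ∈ [0, 1)`. So against any population that is not pure action 1, the
lower of two strategies earns strictly more. Every state arising in the definition of a constrained
ESS on `[α, 1]` with `α < 1` is such a state: this makes `α` stable against every invader, and lets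
`α` invade every other `m ∈ [α, 1]`.
-/

/-- Payoff of mixed strategy `x` against population state `m` in a single-population
game with 2×2 payoff matrix entries `a11 a12 a21 a22`. -/
def uA (a11 a12 a21 a22 x m : ℝ) : ℝ :=
  x * m * a11 + x * (1 - m) * a12 + (1 - x) * m * a21 + (1 - x) * (1 - m) * a22

/-- `m'` is a constrained evolutionarily stable strategy w.r.t. constraint set `C`:
`m' ∈ C` and for every `m ∈ C` with `m ≠ m'` there is `ε̄ ∈ (0,1]` such that `m'`
strictly outperforms `m` against `ε m + (1 − ε) m'` for all `ε ∈ (0, ε̄)`. -/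
def IsCESS (a11 a12 a21 a22 : ℝ) (C : Set ℝ) (m' : ℝ) : Prop :=
  m' ∈ C ∧ ∀ m ∈ C, m ≠ m' → ∃ εb ∈ Set.Ioc (0:ℝ) 1, ∀ ε ∈ Set.Ioo (0:ℝ) εb,
    uA a11 a12 a21 a22 m' (ε * m + (1 - ε) * m') >
      uA a11 a12 a21 a22 m (ε * m + (1 - ε) * m')

lemma uA_sub_uA (a11 a12 a21 a22 x y p : ℝ) :
    uA a11 a12 a21 a22 x p - uA a11 a12 a21 a22 y p
      = (x - y) * (p * (a11 - a21) - (1 - p) * (a22 - a12)) := by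
  unfold uA; ring

lemma uA_lt_uA_of_lt {a11 a12 a21 a22 x y p : ℝ} (hβ1 : a11 - a21 ≤ 0) (hβ2 : 0 < a22 - a12)
    (hp : p ∈ Set.Ico 0 1) (hxy : x < y) :
    uA a11 a12 a21 a22 y p < uA a11 a12 a21 a22 x p := by
  obtain ⟨hp0, hp1⟩ := hp
  have hgain : p * (a11 - a21) - (1 - p) * (a22 - a12) < 0 := by
    nlinarith [mul_nonpos_of_nonneg_of_nonpos hp0 hβ1, mul_pos (sub_pos.2 hp1) hβ2]
  have := uA_sub_uA a11 a12 a21 a22 y x p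
  nlinarith [mul_neg_of_pos_of_neg (sub_pos.2 hxy) hgain]

lemma isCESS_left_endpoint {a11 a12 a21 a22 α : ℝ} (hβ1 : a11 - a21 ≤ 0)
    (hβ2 : 0 < a22 - a12) (hα0 : 0 ≤ α) (hα1 : α < 1) :
    IsCESS a11 a12 a21 a22 (Set.Icc α 1) α := by
  refine ⟨⟨le_rfl, hα1.le⟩, fun m ⟨hαm, hm1⟩ hmα ↦ ⟨1, ⟨one_pos, le_rfl⟩, ?_⟩⟩
  rintro ε ⟨hε0, hε1⟩
  have hαm : α < m := lt_of_le_of_ne hαm (Ne.symm hmα)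
  refine uA_lt_uA_of_lt hβ1 hβ2 ⟨?_, ?_⟩ hαm
  · nlinarith
  · nlinarith

lemma eq_left_endpoint_of_isCESS {a11 a12 a21 a22 α m : ℝ} (hβ1 : a11 - a21 ≤ 0)
    (hβ2 : 0 < a22 - a12) (hα0 : 0 ≤ α) (hα1 : α < 1)
    (hm : IsCESS a11 a12 a21 a22 (Set.Icc α 1) m) : m = α := by
  obtain ⟨⟨hαm, hm1⟩, hstable⟩ := hm
  by_contra hmα
  have hαm : α < m := lt_of_le_of_ne hαm (Ne.symm hmα)
  obtain ⟨εb, ⟨hεb0, hεb1⟩, hεb⟩ := hstable α ⟨le_rfl, hα1.le⟩ hαm.ne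
  have hε : εb / 2 ∈ Set.Ioo 0 εb := ⟨half_pos hεb0, half_lt_self hεb0⟩
  have hinvade := uA_lt_uA_of_lt hβ1 hβ2
    (p := εb / 2 * α + (1 - εb / 2) * m) ⟨by nlinarith, by nlinarith⟩ hαm
  exact (hεb _ hε).not_gt hinvade

/-- If β1 = a11 − a21 ≤ 0, β2 = a22 − a12 > 0 and C = [α, 1] with
0 < α < 1, then α is the unique constrained ESS. -/
theorem stmt9 (a11 a12 a21 a22 α : ℝ)
    (hβ1 : a11 - a21 ≤ 0) (hβ2 : a22 - a12 > 0) (hα0 : 0 < α) (hα1 : α < 1) :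
    IsCESS a11 a12 a21 a22 (Set.Icc α 1) α ∧
    (∀ m, IsCESS a11 a12 a21 a22 (Set.Icc α 1) m → m = α) :=
  ⟨isCESS_left_endpoint hβ1 hβ2 hα0.le hα1,
    fun _ hm ↦ eq_left_endpoint_of_isCESS hβ1 hβ2 hα0.le hα1 hm⟩
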